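/- arXiv:2004.14359 — 2 statements merged into one kernel-verified Lean document; each statement's English description precedes it below -/
import Mathlib

section
/- Let a > 0 with a ≠ 1, let F:ℝ→ℝ be smooth, and let u_a(p) = F(ψ_a(p))Jp + φ_p((grad ψ_a)(p)). Then u_a is not localizable: there exists p ∈ S³ with D(|u_a|²)(p)[u_a(p)] ≠ 0. Consequently, since every KKPS field is localizable and localizability is preserved by isometries of the round sphere, there exist no A ∈ O(4) and no KKPS field w with w(Ap) = A(u_a(p)) for all p ∈ S³. -/
open RealInnerProductSpace

noncomputable section

/-- ℝ⁴ with coordinates (x₁,y₁,x₂,y₂) and the Euclidean inner product; S³ is the set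
of `p` with `‖p‖ = 1`. -/
abbrev E4 := EuclideanSpace ℝ (Fin 4)

/-- The linear map `J(x₁,y₁,x₂,y₂) = (−y₁,x₁,−y₂,x₂)`; its restriction to S³ is the
Hopf field ξ. -/
def Jm (p : E4) : E4 := WithLp.toLp 2 ![-p 1, p 0, -p 3, p 2]

/-- The linear map `J'(x₁,y₁,x₂,y₂) = (−y₁,x₁,y₂,−x₂)`; its restriction to S³ is the
anti-Hopf field ξ'. -/
def Jm' (p : E4) : E4 := WithLp.toLp 2 ![-p 1, p 0, p 3, -p 2]

/-- The frame field `X₁(p) = (−x₂,y₂,x₁,−y₁)`. -/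
def X1 (p : E4) : E4 := WithLp.toLp 2 ![-p 2, p 3, p 0, -p 1]

/-- The frame field `X₂(p) = (−y₂,−x₂,y₁,x₁)`. -/
def X2 (p : E4) : E4 := WithLp.toLp 2 ![-p 3, -p 2, p 1, p 0]

/-- Orthogonal projection onto the tangent space of S³ at `p`: `P_p(v) = v − ⟨p,v⟩p`. -/
def Pt (p v : E4) : E4 := v - ⟪p, v⟫ • p

/-- A (smooth) tangent field on S³: a smooth map `u : ℝ⁴ → ℝ⁴` with `⟨p, u p⟩ = 0`
for every `p ∈ S³`. -/
def IsTangentField (u : E4 → E4) : Prop :=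
  ContDiff ℝ (⊤ : ℕ∞) u ∧ ∀ p : E4, ‖p‖ = 1 → ⟪p, u p⟫ = 0

/-- Levi-Civita covariant derivative of the round metric: `(∇_u v)(p) = P_p(Dv(p)[u(p)])`. -/
def scov (u v : E4 → E4) (p : E4) : E4 := Pt p (fderiv ℝ v p (u p))

/-- Spherical gradient: `(grad f)(p) = P_p(∇f(p))`. -/
def sgrad (f : E4 → ℝ) (p : E4) : E4 := Pt p (gradient f p)

/-- Spherical divergence: `(div u)(p) = tr(Du(p)) − ⟨Du(p)[p], p⟩`. -/
def sdiv (u : E4 → E4) (p : E4) : ℝ :=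
  LinearMap.trace ℝ E4 (fderiv ℝ u p).toLinearMap - ⟪fderiv ℝ u p p, p⟫

/-- Spherical Laplacian with geometers' sign: `Δf = −div (grad f)`. -/
def slap (f : E4 → ℝ) (p : E4) : ℝ := - sdiv (sgrad f) p

/-- The transverse complex structure of the standard Sasakian structure on S³:
`φ_p(v) = Jv + ⟨v, Jp⟩p`. -/
def phiT (p v : E4) : E4 := Jm v + ⟪v, Jm p⟫ • p

/-- `u` is a steady Euler field on S³ with pressure `pr`: `div u = 0` on S³ and
`(∇_u u)(p) = −(grad pr)(p)` for all `p ∈ S³`. -/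
def IsSteadyEulerWithPressure (u : E4 → E4) (pr : E4 → ℝ) : Prop :=
  ∀ p : E4, ‖p‖ = 1 → sdiv u p = 0 ∧ scov u u p = - sgrad pr p

/-- `u` is a steady Euler field on S³, for some smooth pressure. -/
def IsSteadyEuler (u : E4 → E4) : Prop :=
  ∃ pr : E4 → ℝ, ContDiff ℝ (⊤ : ℕ∞) pr ∧ IsSteadyEulerWithPressure u pr

/-- A tangent field `u` is localizable if `D(|u|²)(p)[u(p)] = 0` for all `p ∈ S³`. -/
def IsLocalizable (u : E4 → E4) : Prop :=
  ∀ p : E4, ‖p‖ = 1 → fderiv ℝ (fun q => ⟪u q, u q⟫) p (u p) = 0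

/-- The function `q(p) = x₁² + y₁²`. -/
def qf (p : E4) : ℝ := p 0 ^ 2 + p 1 ^ 2

/-- The KKPS family: `u(p) = A(q(p))·Jp + B(q(p))·J'p`. -/
def kkps (A B : ℝ → ℝ) (p : E4) : E4 := A (qf p) • Jm p + B (qf p) • Jm' p

/-- Determinant of four vectors in ℝ⁴ (given as rows). -/
def det4 (a b c d : E4) : ℝ :=
  Matrix.det (Matrix.of ![(fun i => a i), (fun i => b i), (fun i => c i), (fun i => d i)])

/-- Cross product of tangent vectors at `p ∈ S³`: `⟨v ×_p w, z⟩ = det(p,v,w,z)`. -/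
def crossS (p v w : E4) : E4 := WithLp.toLp 2 (fun i => det4 p v w (WithLp.toLp 2 (Pi.single i 1)))

/-- `c` is the curl of the tangent field `u` on S³: `c` is a tangent field such that
`⟨(∇_v u)(p), w⟩ − ⟨(∇_w u)(p), v⟩ = ⟨c(p), v ×_p w⟩` for all tangent `v, w` at `p ∈ S³`
(with the orientation convention given by `det4`, for which `curl ξ = 2ξ`). -/
def IsCurlOf (u c : E4 → E4) : Prop :=
  IsTangentField c ∧
  ∀ p : E4, ‖p‖ = 1 → ∀ v w : E4, ⟪p, v⟫ = 0 → ⟪p, w⟫ = 0 →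
    ⟪Pt p (fderiv ℝ u p v), w⟫ - ⟪Pt p (fderiv ℝ u p w), v⟫ = ⟪c p, crossS p v w⟫

/-- The Sasakian KKPS ansatz on S³: `u(p) = F(ψ(p))·Jp + φ_p((grad (G∘ψ))(p))`. -/
def ansatz (ψ : E4 → ℝ) (F G : ℝ → ℝ) (p : E4) : E4 :=
  F (ψ p) • Jm p + phiT p (sgrad (fun q => G (ψ q)) p)

/-- The quartic polynomial `ψ_a`, a deformation of Nomizu's isoparametric polynomial. -/
def ψa (a : ℝ) (p : E4) : ℝ :=
  (1/2) * ((p 0 ^ 2 + p 1 ^ 2 + p 2 ^ 2 + p 3 ^ 2) ^ 2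
      + (p 0 ^ 2 + p 1 ^ 2 - p 2 ^ 2 - p 3 ^ 2) ^ 2)
    + 2 * a * ((p 0 ^ 2 - p 1 ^ 2) * (p 2 ^ 2 - p 3 ^ 2) + 4 * p 0 * p 1 * p 2 * p 3)

/-- The field `u_a(p) = F(ψ_a(p))·Jp + φ_p((grad ψ_a)(p))`. -/
def nomizuField (a : ℝ) (F : ℝ → ℝ) (p : E4) : E4 :=
  F (ψa a p) • Jm p + phiT p (sgrad (ψa a) p)

/-- The field `u(p) = 2a₁(x₁y₂+y₁x₂)·X₁(p) + 2a₂(x₁x₂−y₁y₂)·X₂(p)`. -/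
def abField (a₁ a₂ : ℝ) (p : E4) : E4 :=
  (2 * a₁ * (p 0 * p 3 + p 1 * p 2)) • X1 p + (2 * a₂ * (p 0 * p 2 - p 1 * p 3)) • X2 p

/-! Writing `z₁ = x₁ + i y₁`, `z₂ = x₂ + i y₂`, the polynomial
`ψ_a = |z₁|⁴ + |z₂|⁴ + 2a Re(z₁² z̄₂²)` is homogeneous of degree 4 and invariant under the Hopf
rotations `z ↦ e^{iθ} z`, so `⟨p, ∇ψ_a⟩ = 4ψ_a` and `⟨∇ψ_a, Jp⟩ = 0`. Hence
`u_a = (F(ψ_a) − 4ψ_a) Jp + J∇ψ_a` and `|u_a|² = h(ψ_a, |p|²) + |∇ψ_a|²` for an explicit `h`.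
Both `ψ_a` and `|p|²` are stationary along `u_a`, so
`D|u_a|²[u_a] = D|∇ψ_a|²[u_a] = 128 a (1 − a²) Im(z₁² z̄₂²) (|z₁|⁴ − |z₂|⁴)`,
which does not vanish at `(2/3, 1/3, 2/3, 0)`.

For a KKPS field `w`, `|w|²` is a function of `|z₁|²` and `|p|²`, both stationary along `w`, so `w`
is localizable. Localizability passes along an isometry because the derivative of a function in
a direction tangent to S³ only depends on its restriction to S³ (differentiate along a great
circle). -/

open MvPolynomial

theorem MvPolynomial.pderiv_ofNat {σ R : Type*} [CommSemiring R] (i : σ) (n : ℕ)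
    [n.AtLeastTwo] : pderiv i (no_index (OfNat.ofNat n) : MvPolynomial σ R) = 0 :=
  (pderiv i).map_natCast n

section Calculus

variable {ι : Type*} [Fintype ι] [DecidableEq ι]

theorem hasFDerivAt_mvPolynomial_eval (P : MvPolynomial ι ℝ) (x : EuclideanSpace ℝ ι) :
    HasFDerivAt (fun y : EuclideanSpace ℝ ι => eval (y ·) P)
      (∑ i, eval (x ·) (pderiv i P) • EuclideanSpace.proj (𝕜 := ℝ) i) x := by
  induction P using MvPolynomial.induction_on with
  | C a => simpa using hasFDerivAt_const a x
  | add p q hp hq => simpa [Finset.sum_add_distrib, add_smul] using hp.fun_add hq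
  | mul_X p n hp =>
    simpa [Derivation.leibniz, add_smul, Finset.sum_add_distrib, Finset.smul_sum, smul_smul,
      Pi.single_apply, apply_ite, mul_comm] using hp.fun_mul (PiLp.hasFDerivAt_apply 2 x n)

theorem hasGradientAt_mvPolynomial_eval (P : MvPolynomial ι ℝ) (x : EuclideanSpace ℝ ι) :
    HasGradientAt (fun y : EuclideanSpace ℝ ι => eval (y ·) P)
      (WithLp.toLp 2 fun i => eval (x ·) (pderiv i P)) x := by
  rw [hasGradientAt_iff_hasFDerivAt]
  refine (hasFDerivAt_mvPolynomial_eval P x).congr_fderiv ?_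
  ext v
  simp [PiLp.inner_apply, mul_comm]

end Calculus

section Sphere

variable {E G : Type*} [NormedAddCommGroup E] [InnerProductSpace ℝ E]
  [NormedAddCommGroup G] [NormedSpace ℝ G]

theorem fderiv_comp_prodMk_normSq_apply_eq_zero {h : ℝ × ℝ → ℝ} {φ : E → ℝ}
    {φ' : E →L[ℝ] ℝ} {x v : E} (hh : DifferentiableAt ℝ h (φ x, ‖x‖ ^ 2))
    (hφ : HasFDerivAt φ φ' x) (hφv : φ' v = 0) (hxv : ⟪x, v⟫ = 0) :
    fderiv ℝ (fun y => h (φ y, ‖y‖ ^ 2)) x v = 0 := by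
  have hc : HasFDerivAt (fun y => h (φ y, ‖y‖ ^ 2)) _ x :=
    hh.hasFDerivAt.comp x (hφ.prodMk (hasStrictFDerivAt_norm_sq x).hasFDerivAt)
  rw [hc.fderiv]
  simp [hφv, hxv, Prod.mk_zero_zero]

theorem fderiv_apply_eq_of_eqOn_sphere {f g : E → G} {p v : E} (hf : DifferentiableAt ℝ f p)
    (hg : DifferentiableAt ℝ g p) (hfg : ∀ q, ‖q‖ = 1 → f q = g q) (hp : ‖p‖ = 1)
    (hv : ⟪p, v⟫ = 0) : fderiv ℝ f p v = fderiv ℝ g p v := by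
  suffices unit : ∀ e, ‖e‖ = 1 → ⟪p, e⟫ = 0 → fderiv ℝ f p e = fderiv ℝ g p e by
    rcases eq_or_ne v 0 with rfl | hv0
    · simp
    have hnorm : ‖v‖ ≠ 0 := norm_ne_zero_iff.mpr hv0
    have key := unit (‖v‖⁻¹ • v) (by rw [norm_smul, norm_inv, norm_norm, inv_mul_cancel₀ hnorm])
      (by rw [inner_smul_right, hv, mul_zero])
    rw [map_smul, map_smul] at key
    exact smul_right_injective G (inv_ne_zero hnorm) key
  intro e he hpe
  set γ : ℝ → E := fun t => Real.cos t • p + Real.sin t • e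
  have hγ : HasDerivAt γ e 0 := by
    simpa using
      ((Real.hasDerivAt_cos 0).smul_const p).fun_add ((Real.hasDerivAt_sin 0).smul_const e)
  have hγp : p = γ 0 := by simp [γ]
  have hγS : ∀ t, ‖γ t‖ = 1 := fun t => by
    rw [← pow_eq_one_iff_of_nonneg (norm_nonneg _) two_ne_zero, norm_add_sq_real, norm_smul,
      norm_smul, inner_smul_left, inner_smul_right, hpe, hp, he]
    simp [Real.cos_sq_add_sin_sq]
  have hfγ := hf.hasFDerivAt.comp_hasDerivAt_of_eq 0 hγ hγp
  have hgγ := hg.hasFDerivAt.comp_hasDerivAt_of_eq 0 hγ hγp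
  have hcomp : f ∘ γ = g ∘ γ := funext fun t => hfg _ (hγS t)
  exact (hcomp ▸ hfγ).unique hgγ

end Sphere

theorem inner_Jm_Jm (x y : E4) : ⟪Jm x, Jm y⟫ = ⟪x, y⟫ := by
  simp only [Jm, Fin.isValue, PiLp.inner_apply, RCLike.inner_apply, Real.ringHom_apply,
    Fin.sum_univ_four, Matrix.cons_val_zero, mul_neg, neg_mul, neg_neg, Matrix.cons_val_one,
    Matrix.cons_val]
  ring

theorem inner_Jm_right (x y : E4) : ⟪x, Jm y⟫ = -⟪Jm x, y⟫ := by
  simp only [Jm, Fin.isValue, PiLp.inner_apply, RCLike.inner_apply, Real.ringHom_apply,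
    Fin.sum_univ_four, Matrix.cons_val_zero, neg_mul, Matrix.cons_val_one, Matrix.cons_val, mul_neg,
    neg_add_rev, neg_neg]
  ring

theorem inner_self_Jm (x : E4) : ⟪x, Jm x⟫ = 0 := by
  simp only [Jm, Fin.isValue, PiLp.inner_apply, RCLike.inner_apply, Real.ringHom_apply,
    Fin.sum_univ_four, Matrix.cons_val_zero, neg_mul, Matrix.cons_val_one, Matrix.cons_val]
  ring

theorem phiT_Pt (q g : E4) : phiT q (Pt q g) = Jm g - ⟪q, g⟫ • Jm q + ⟪g, Jm q⟫ • q := by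
  ext i
  fin_cases i <;>
    simp only [phiT, Pt, Jm, PiLp.inner_apply, Fin.sum_univ_four, PiLp.add_apply, PiLp.sub_apply,
      PiLp.smul_apply, smul_eq_mul, RCLike.inner_apply, conj_trivial,
      Fin.zero_eta, Fin.mk_one, Fin.reduceFinMk, Matrix.cons_val] <;> ring

def ψaPoly (a : ℝ) : MvPolynomial (Fin 4) ℝ :=
  C (1 / 2) * ((X 0 ^ 2 + X 1 ^ 2 + X 2 ^ 2 + X 3 ^ 2) ^ 2
      + (X 0 ^ 2 + X 1 ^ 2 - X 2 ^ 2 - X 3 ^ 2) ^ 2)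
    + C (2 * a) * ((X 0 ^ 2 - X 1 ^ 2) * (X 2 ^ 2 - X 3 ^ 2)) + C (8 * a) * (X 0 * X 1 * X 2 * X 3)

def gradψa (a : ℝ) (q : E4) : E4 := WithLp.toLp 2 fun i => eval (q ·) (pderiv i (ψaPoly a))

/-- `Im(z₁² z̄₂²)`. -/
def imZ1SqConjZ2Sq (q : E4) : ℝ :=
  2 * q 0 * q 1 * (q 2 ^ 2 - q 3 ^ 2) - 2 * q 2 * q 3 * (q 0 ^ 2 - q 1 ^ 2)

theorem ψa_eq_eval (a : ℝ) : ψa a = fun q => eval (q ·) (ψaPoly a) := by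
  funext q
  simp only [ψa, Fin.isValue, one_div, ψaPoly, map_add, map_mul, eval_C, map_pow, eval_X, map_sub]
  ring

theorem hasGradientAt_ψa (a : ℝ) (q : E4) : HasGradientAt (ψa a) (gradψa a q) q := by
  rw [ψa_eq_eval]
  exact hasGradientAt_mvPolynomial_eval _ q

theorem inner_self_gradψa (a : ℝ) (q : E4) : ⟪q, gradψa a q⟫ = 4 * ψa a q := by
  simp only [gradψa, ψaPoly, one_div, Fin.isValue, map_add, Derivation.leibniz,
    Derivation.leibniz_pow, Nat.add_one_sub_one, pow_one, pderiv_X, Pi.single_apply, smul_eq_mul,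
    mul_ite, mul_one, mul_zero, smul_ite, nsmul_eq_mul, Nat.cast_ofNat, map_sub, derivation_C,
    add_zero, map_mul, eval_C, eval_ofNat, map_pow, eval_X, PiLp.inner_apply, RCLike.inner_apply,
    Real.ringHom_apply, Fin.sum_univ_four, ↓reduceIte, one_ne_zero, map_zero, Fin.reduceEq,
    sub_zero, sub_self, zero_add, zero_ne_one, zero_sub, mul_neg, ψa]
  ring

theorem inner_gradψa_Jm (a : ℝ) (q : E4) : ⟪gradψa a q, Jm q⟫ = 0 := by
  simp only [gradψa, ψaPoly, one_div, Fin.isValue, map_add, Derivation.leibniz,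
    Derivation.leibniz_pow, Nat.add_one_sub_one, pow_one, pderiv_X, Pi.single_apply, smul_eq_mul,
    mul_ite, mul_one, mul_zero, smul_ite, nsmul_eq_mul, Nat.cast_ofNat, map_sub, derivation_C,
    add_zero, map_mul, eval_C, eval_ofNat, map_pow, eval_X, Jm, PiLp.inner_apply,
    RCLike.inner_apply, Real.ringHom_apply, Fin.sum_univ_four, Matrix.cons_val_zero, ↓reduceIte,
    one_ne_zero, map_zero, Fin.reduceEq, sub_zero, sub_self, zero_add, neg_mul, Matrix.cons_val_one,
    zero_ne_one, zero_sub, mul_neg, Matrix.cons_val]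
  ring

theorem normSq_gradψa (a : ℝ) :
    (fun q => ‖gradψa a q‖ ^ 2) = fun q => eval (q ·) (∑ i, pderiv i (ψaPoly a) ^ 2) := by
  funext q
  simp [gradψa, EuclideanSpace.norm_sq_eq, map_sum]

theorem differentiable_normSq_gradψa (a : ℝ) : Differentiable ℝ fun q => ‖gradψa a q‖ ^ 2 := by
  rw [normSq_gradψa]
  exact fun q => (hasFDerivAt_mvPolynomial_eval _ q).differentiableAt

theorem fderiv_normSq_gradψa (a c : ℝ) (q : E4) :
    fderiv ℝ (fun q => ‖gradψa a q‖ ^ 2) q (c • Jm q + Jm (gradψa a q)) =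
      128 * a * (1 - a ^ 2) * imZ1SqConjZ2Sq q
        * ((q 0 ^ 2 + q 1 ^ 2) ^ 2 - (q 2 ^ 2 + q 3 ^ 2) ^ 2) := by
  rw [normSq_gradψa, (hasFDerivAt_mvPolynomial_eval _ q).fderiv]
  simp only [ψaPoly, one_div, Fin.isValue, map_add, Derivation.leibniz, Derivation.leibniz_pow,
    Nat.add_one_sub_one, pow_one, pderiv_X, Pi.single_apply, smul_eq_mul, mul_ite, mul_one,
    mul_zero, smul_ite, nsmul_eq_mul, Nat.cast_ofNat, map_sub, derivation_C, add_zero,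
    Fin.sum_univ_four, ↓reduceIte, one_ne_zero, Fin.reduceEq, sub_zero, sub_self, zero_add,
    zero_ne_one, zero_sub, mul_neg, pderiv_ofNat, map_neg, map_mul, eval_ofNat, eval_C, map_pow,
    eval_X, map_zero, neg_zero, add_neg_cancel, neg_neg, Jm, gradψa, neg_add_rev, add_apply,
    smul_apply, PiLp.proj_apply, PiLp.smul_apply, Matrix.cons_val_zero, Matrix.cons_val_one,
    Matrix.cons_val, imZ1SqConjZ2Sq]
  ring

theorem nomizuField_eq (a : ℝ) (F : ℝ → ℝ) (q : E4) :
    nomizuField a F q = (F (ψa a q) - 4 * ψa a q) • Jm q + Jm (gradψa a q) := by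
  rw [nomizuField, sgrad, (hasGradientAt_ψa a q).gradient, phiT_Pt, inner_self_gradψa,
    inner_gradψa_Jm, zero_smul, add_zero, sub_smul]
  abel

theorem inner_self_nomizuField (a : ℝ) (F : ℝ → ℝ) (q : E4) : ⟪q, nomizuField a F q⟫ = 0 := by
  rw [nomizuField_eq, inner_add_right, inner_smul_right, inner_self_Jm, inner_Jm_right,
    real_inner_comm, inner_gradψa_Jm]
  simp

theorem inner_gradψa_nomizuField (a : ℝ) (F : ℝ → ℝ) (q : E4) :
    ⟪gradψa a q, nomizuField a F q⟫ = 0 := by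
  rw [nomizuField_eq, inner_add_right, inner_smul_right, inner_gradψa_Jm, inner_self_Jm]
  simp

theorem inner_nomizuField_self (a : ℝ) (F : ℝ → ℝ) (q : E4) :
    ⟪nomizuField a F q, nomizuField a F q⟫ =
      (F (ψa a q) - 4 * ψa a q) ^ 2 * ‖q‖ ^ 2 + 8 * ψa a q * (F (ψa a q) - 4 * ψa a q)
        + ‖gradψa a q‖ ^ 2 := by
  rw [nomizuField_eq]
  simp only [inner_add_left, inner_add_right, inner_smul_left, inner_smul_right, inner_Jm_Jm,
    real_inner_comm q, inner_self_gradψa, RCLike.conj_to_real]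
  rw [real_inner_self_eq_norm_sq, real_inner_self_eq_norm_sq]
  ring

theorem fderiv_inner_nomizuField_self (a : ℝ) {F : ℝ → ℝ} (hF : Differentiable ℝ F) (q : E4) :
    fderiv ℝ (fun q => ⟪nomizuField a F q, nomizuField a F q⟫) q (nomizuField a F q) =
      128 * a * (1 - a ^ 2) * imZ1SqConjZ2Sq q
        * ((q 0 ^ 2 + q 1 ^ 2) ^ 2 - (q 2 ^ 2 + q 3 ^ 2) ^ 2) := by
  set h : ℝ × ℝ → ℝ := fun y => (F y.1 - 4 * y.1) ^ 2 * y.2 + 8 * y.1 * (F y.1 - 4 * y.1)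
  have hh : Differentiable ℝ h := by fun_prop
  have hψ := (hasGradientAt_ψa a q).hasFDerivAt
  have hk : DifferentiableAt ℝ (fun q => h (ψa a q, ‖q‖ ^ 2)) q :=
    (hh _).comp q (hψ.differentiableAt.prodMk (differentiableAt_id.norm_sq ℝ))
  have hsplit : (fun q => ⟪nomizuField a F q, nomizuField a F q⟫) =
      fun q => h (ψa a q, ‖q‖ ^ 2) + ‖gradψa a q‖ ^ 2 :=
    funext (inner_nomizuField_self a F)
  rw [hsplit, fderiv_fun_add hk (differentiable_normSq_gradψa a q), add_apply,
    fderiv_comp_prodMk_normSq_apply_eq_zero (hh _) hψ (inner_gradψa_nomizuField a F q)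
      (inner_self_nomizuField a F q), zero_add, nomizuField_eq, fderiv_normSq_gradψa]

theorem differentiable_inner_nomizuField_self (a : ℝ) {F : ℝ → ℝ} (hF : Differentiable ℝ F) :
    Differentiable ℝ fun q => ⟪nomizuField a F q, nomizuField a F q⟫ := by
  have hψ : Differentiable ℝ (ψa a) := fun q => (hasGradientAt_ψa a q).differentiableAt
  have hn : Differentiable ℝ fun q : E4 => ‖q‖ ^ 2 := differentiable_id.norm_sq ℝ
  have hN := differentiable_normSq_gradψa a
  simp only [inner_nomizuField_self]
  fun_prop

def nomizuPoint : E4 := !₂[2 / 3, 1 / 3, 2 / 3, 0]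

theorem norm_nomizuPoint : ‖nomizuPoint‖ = 1 := by
  rw [EuclideanSpace.norm_eq]
  norm_num [nomizuPoint, Fin.sum_univ_four, Matrix.cons_val_two, Matrix.cons_val_three,
    Matrix.tail_cons, Matrix.head_cons]

theorem exists_fderiv_inner_nomizuField_self_ne_zero {a : ℝ} (ha : 0 < a) (ha1 : a ≠ 1)
    {F : ℝ → ℝ} (hF : Differentiable ℝ F) :
    ∃ p : E4, ‖p‖ = 1 ∧
      fderiv ℝ (fun q => ⟪nomizuField a F q, nomizuField a F q⟫) p (nomizuField a F p) ≠ 0 := by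
  refine ⟨nomizuPoint, norm_nomizuPoint, ?_⟩
  rw [fderiv_inner_nomizuField_self a hF]
  have h1a : 1 - a ^ 2 ≠ 0 := by
    rw [show 1 - a ^ 2 = (1 - a) * (1 + a) by ring]
    exact mul_ne_zero (sub_ne_zero.mpr ha1.symm) (by positivity)
  norm_num [nomizuPoint, imZ1SqConjZ2Sq, ha.ne', h1a, Matrix.cons_val_two, Matrix.cons_val_three,
    Matrix.tail_cons, Matrix.head_cons]

theorem inner_kkps_self (A B : ℝ → ℝ) (q : E4) :
    ⟪kkps A B q, kkps A B q⟫ = (A (qf q) ^ 2 + B (qf q) ^ 2) * ‖q‖ ^ 2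
      + 2 * A (qf q) * B (qf q) * (2 * qf q - ‖q‖ ^ 2) := by
  simp only [kkps, qf, Fin.isValue, Jm, Jm', inner_self_eq_norm_sq_to_K, Real.ringHom_apply,
    EuclideanSpace.norm_sq_eq, PiLp.add_apply, PiLp.smul_apply, smul_eq_mul, Real.norm_eq_abs,
    sq_abs, Fin.sum_univ_four, Matrix.cons_val_zero, mul_neg, Matrix.cons_val_one, Matrix.cons_val]
  ring

theorem inner_self_kkps (A B : ℝ → ℝ) (q : E4) : ⟪q, kkps A B q⟫ = 0 := by
  simp only [kkps, Jm, Fin.isValue, Jm', PiLp.inner_apply, PiLp.add_apply, PiLp.smul_apply,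
    smul_eq_mul, RCLike.inner_apply, Real.ringHom_apply, Fin.sum_univ_four, Matrix.cons_val_zero,
    mul_neg, Matrix.cons_val_one, Matrix.cons_val]
  ring

theorem hasFDerivAt_qf (q : E4) :
    HasFDerivAt qf
      (∑ i, eval (q ·) (pderiv i (X 0 ^ 2 + X 1 ^ 2)) • EuclideanSpace.proj (𝕜 := ℝ) i) q := by
  have hqf : qf = fun q => eval (q ·) (X 0 ^ 2 + X 1 ^ 2 : MvPolynomial (Fin 4) ℝ) := by
    funext q
    simp [qf]
  rw [hqf]
  exact hasFDerivAt_mvPolynomial_eval _ q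

theorem kkps_isLocalizable {A B : ℝ → ℝ} (hA : Differentiable ℝ A) (hB : Differentiable ℝ B) :
    IsLocalizable (kkps A B) := by
  intro q _
  simp only [inner_kkps_self]
  refine fderiv_comp_prodMk_normSq_apply_eq_zero
    (h := fun y => (A y.1 ^ 2 + B y.1 ^ 2) * y.2 + 2 * A y.1 * B y.1 * (2 * y.1 - y.2))
    (by fun_prop) (hasFDerivAt_qf q) ?_ (inner_self_kkps A B q)
  simp only [Fin.isValue, map_add, Derivation.leibniz_pow, Nat.add_one_sub_one, pow_one, pderiv_X,
    Pi.single_apply, smul_eq_mul, mul_ite, mul_one, mul_zero, smul_ite, nsmul_eq_mul,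
    Nat.cast_ofNat, Fin.sum_univ_four, ↓reduceIte, map_mul, eval_ofNat, eval_X, one_ne_zero,
    map_zero, add_zero, zero_ne_one, zero_add, Fin.reduceEq, zero_smul, kkps, qf, Jm, Jm',
    add_apply, smul_apply, PiLp.proj_apply, PiLp.smul_apply, Matrix.cons_val_zero, mul_neg,
    Matrix.cons_val_one]
  ring

theorem differentiable_inner_kkps_self {A B : ℝ → ℝ} (hA : Differentiable ℝ A)
    (hB : Differentiable ℝ B) : Differentiable ℝ fun q => ⟪kkps A B q, kkps A B q⟫ := by
  have hqf : Differentiable ℝ qf := fun q => (hasFDerivAt_qf q).differentiableAt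
  have hn : Differentiable ℝ fun q : E4 => ‖q‖ ^ 2 := differentiable_id.norm_sq ℝ
  simp only [inner_kkps_self]
  fun_prop

theorem IsLocalizable.of_linearIsometryEquiv {u w : E4 → E4} (Φ : E4 ≃ₗᵢ[ℝ] E4)
    (hw : IsLocalizable w) (hwd : Differentiable ℝ fun q => ⟪w q, w q⟫)
    (hud : Differentiable ℝ fun q => ⟪u q, u q⟫) (hu : ∀ p, ‖p‖ = 1 → ⟪p, u p⟫ = 0)
    (hΦ : ∀ p, ‖p‖ = 1 → w (Φ p) = Φ (u p)) : IsLocalizable u := by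
  intro p hp
  have hcomp : HasFDerivAt (fun q => ⟪w (Φ q), w (Φ q)⟫)
      ((fderiv ℝ (fun q => ⟪w q, w q⟫) (Φ p)).comp (Φ : E4 →L[ℝ] E4)) p :=
    (hwd _).hasFDerivAt.comp p Φ.toContinuousLinearEquiv.hasFDerivAt
  calc fderiv ℝ (fun q => ⟪u q, u q⟫) p (u p)
      = fderiv ℝ (fun q => ⟪w (Φ q), w (Φ q)⟫) p (u p) :=
        fderiv_apply_eq_of_eqOn_sphere (hud p) hcomp.differentiableAt
          (fun q hq => by rw [hΦ q hq, LinearIsometryEquiv.inner_map_map]) hp (hu p hp)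
    _ = fderiv ℝ (fun q => ⟪w q, w q⟫) (Φ p) (w (Φ p)) := by
        rw [hcomp.fderiv, hΦ p hp]
        rfl
    _ = 0 := hw _ (by rw [LinearIsometryEquiv.norm_map, hp])

/-- for `a > 0`, `a ≠ 1`, the field `u_a = F(ψ_a)ξ + φ(grad ψ_a)` is not
localizable; consequently no isometry of the round S³ (induced by `Φ ∈ O(4)`) relates it
to a KKPS field. -/
theorem statement14 (a : ℝ) (ha : 0 < a) (ha1 : a ≠ 1)
    (F : ℝ → ℝ) (hF : ContDiff ℝ (⊤ : ℕ∞) F) :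
    (∃ p : E4, ‖p‖ = 1 ∧
      fderiv ℝ (fun q => ⟪nomizuField a F q, nomizuField a F q⟫) p
        (nomizuField a F p) ≠ 0) ∧
    ¬ ∃ (Φ : E4 ≃ₗᵢ[ℝ] E4) (A B : ℝ → ℝ), ContDiff ℝ (⊤ : ℕ∞) A ∧ ContDiff ℝ (⊤ : ℕ∞) B ∧
        ∀ p : E4, ‖p‖ = 1 → kkps A B (Φ p) = Φ (nomizuField a F p) := by
  have hF' : Differentiable ℝ F := hF.differentiable (by simp)
  obtain ⟨p, hp, hne⟩ := exists_fderiv_inner_nomizuField_self_ne_zero ha ha1 hF'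
  refine ⟨⟨p, hp, hne⟩, ?_⟩
  rintro ⟨Φ, A, B, hA, hB, hΦ⟩
  have hA' : Differentiable ℝ A := hA.differentiable (by simp)
  have hB' : Differentiable ℝ B := hB.differentiable (by simp)
  have hloc : IsLocalizable (nomizuField a F) :=
    (kkps_isLocalizable hA' hB').of_linearIsometryEquiv Φ (differentiable_inner_kkps_self hA' hB')
      (differentiable_inner_nomizuField_self a hF') (fun q _ => inner_self_nomizuField a F q) hΦ
  exact hne (hloc p hp)
end
end

section
/- For all a₁,a₂ ∈ ℝ, the tangent field u(p) = 2a₁(x₁y₂+y₁x₂)X₁(p) + 2a₂(x₁x₂−y₁y₂)X₂(p) is a steady Euler field on S³: div u = 0 on S³ and (∇_u u)(p) = −(grad π)(p) for all p∈S³, with pressure π(p) = ¼a₁a₂(2(x₁²+y₁²−x₂²−y₂²)² − 1). Moreover its Bernoulli function b = π + ½|u|² equals, in Hopf coordinates, ¼[a₁a₂ cos 4s + (a₁²+a₂² − (a₁²−a₂²) cos 2(φ₁+φ₂)) sin² 2s]. -/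
open RealInnerProductSpace

noncomputable section

/-- The point of S³ with Hopf coordinates `(cos s·e^{iφ₁}, sin s·e^{iφ₂})`. -/
def hopfPt (s φ₁ φ₂ : ℝ) : E4 :=
  WithLp.toLp 2 ![Real.cos s * Real.cos φ₁, Real.cos s * Real.sin φ₁,
    Real.sin s * Real.cos φ₂, Real.sin s * Real.sin φ₂]

/-- The pressure `π(p) = ¼a₁a₂(2(x₁²+y₁²−x₂²−y₂²)² − 1)` (equal to `¼a₁a₂cos 4s` on S³). -/
def abPressure (a₁ a₂ : ℝ) (p : E4) : ℝ :=
  (1/4) * a₁ * a₂ * (2 * (p 0 ^ 2 + p 1 ^ 2 - p 2 ^ 2 - p 3 ^ 2) ^ 2 - 1)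

/-!
`X₁` and `X₂` are restrictions of anticommuting linear complex structures with `X₁X₂ = J`, and
`u = c₁X₁ + c₂X₂` with `c₁ = 2a₁(x₁y₂ + y₁x₂)`, `c₂ = 2a₂(x₁x₂ − y₁y₂)`. Hence
`Du[u] = (c₁X₁ + c₂X₂)u + (Dc₁[u])X₁ + (Dc₂[u])X₂`, whose first term is `−|u|²p`, normal to S³.
Each `cᵢ` is constant along its own `Xᵢ`, while `Dc₁[X₂] = 2a₁τ` and `Dc₂[X₁] = 2a₂τ` with
`τ = |z₁|² − |z₂|²`; so `∇_u u = 2τ(a₁c₂X₁ + a₂c₁X₂) = −a₁a₂τ grad τ = −grad π`, since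
`π = ¼a₁a₂(2τ² − 1)`. The same directional derivatives, with `Xᵢ` trace-free and tangent, give
`div u = 0`.
-/

lemma inner_eq_fin_four (x y : E4) : ⟪x, y⟫ = x 0 * y 0 + x 1 * y 1 + x 2 * y 2 + x 3 * y 3 := by
  simp only [PiLp.inner_apply, RCLike.inner_apply, conj_trivial, Fin.sum_univ_four]
  ring

lemma sum_sq_eq_one_of_norm_eq_one {p : E4} (hp : ‖p‖ = 1) :
    p 0 ^ 2 + p 1 ^ 2 + p 2 ^ 2 + p 3 ^ 2 = 1 := by
  have h : ⟪p, p⟫ = 1 := by rw [real_inner_self_eq_norm_sq, hp, one_pow]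
  rw [inner_eq_fin_four] at h
  linear_combination h

lemma trace_eq_sum_apply_single {n : ℕ}
    (L : EuclideanSpace ℝ (Fin n) →L[ℝ] EuclideanSpace ℝ (Fin n)) :
    LinearMap.trace ℝ _ L.toLinearMap = ∑ i, L (EuclideanSpace.single i 1) i := by
  rw [LinearMap.trace_eq_matrix_trace ℝ (EuclideanSpace.basisFun (Fin n) ℝ).toBasis]
  simp [Matrix.trace, LinearMap.toMatrix_apply]

lemma Pt_smul (p v : E4) (c : ℝ) : Pt p (c • v) = c • Pt p v := by
  rw [Pt, Pt, inner_smul_right, smul_sub, smul_smul]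

lemma Pt_smul_self_add {p w : E4} (hp : ‖p‖ = 1) (hw : ⟪p, w⟫ = 0) (c : ℝ) :
    Pt p (c • p + w) = w := by
  have hpp : ⟪p, p⟫ = 1 := by rw [real_inner_self_eq_norm_sq, hp, one_pow]
  rw [Pt, inner_add_right, inner_smul_right, hpp, hw]
  module

def X1L : E4 →L[ℝ] E4 := LinearMap.toContinuousLinearMap
  { toFun := X1
    map_add' := fun v w => by ext i; fin_cases i <;> simp [X1, add_comm]
    map_smul' := fun c v => by ext i; fin_cases i <;> simp [X1] }

def X2L : E4 →L[ℝ] E4 := LinearMap.toContinuousLinearMap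
  { toFun := X2
    map_add' := fun v w => by ext i; fin_cases i <;> simp [X2, add_comm]
    map_smul' := fun c v => by ext i; fin_cases i <;> simp [X2] }

@[simp] lemma X1L_apply (v : E4) : X1L v = X1 v := rfl

@[simp] lemma X2L_apply (v : E4) : X2L v = X2 v := rfl

lemma X1_X1 (p : E4) : X1 (X1 p) = -p := by
  ext i; fin_cases i <;> simp [X1]

lemma X2_X2 (p : E4) : X2 (X2 p) = -p := by
  ext i; fin_cases i <;> simp [X2]

lemma X1_X2 (p : E4) : X1 (X2 p) = Jm p := by
  ext i; fin_cases i <;> simp [X1, X2, Jm]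

lemma X2_X1 (p : E4) : X2 (X1 p) = -Jm p := by
  ext i; fin_cases i <;> simp [X1, X2, Jm]

lemma inner_X1_self (p : E4) : ⟪X1 p, p⟫ = 0 := by
  simp only [inner_eq_fin_four, X1, Matrix.cons_val_zero, Matrix.cons_val_one, Matrix.cons_val]
  ring

lemma inner_X2_self (p : E4) : ⟪X2 p, p⟫ = 0 := by
  simp only [inner_eq_fin_four, X2, Matrix.cons_val_zero, Matrix.cons_val_one, Matrix.cons_val]
  ring

lemma inner_X1_X2 (p : E4) : ⟪X1 p, X2 p⟫ = 0 := by
  simp only [inner_eq_fin_four, X1, X2, Matrix.cons_val_zero, Matrix.cons_val_one, Matrix.cons_val]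
  ring

lemma inner_X1_X1 (p : E4) : ⟪X1 p, X1 p⟫ = ⟪p, p⟫ := by
  simp only [inner_eq_fin_four, X1, Matrix.cons_val_zero, Matrix.cons_val_one, Matrix.cons_val]
  ring

lemma inner_X2_X2 (p : E4) : ⟪X2 p, X2 p⟫ = ⟪p, p⟫ := by
  simp only [inner_eq_fin_four, X2, Matrix.cons_val_zero, Matrix.cons_val_one, Matrix.cons_val]
  ring

lemma trace_X1L : LinearMap.trace ℝ E4 X1L.toLinearMap = 0 := by
  simp [trace_eq_sum_apply_single, Fin.sum_univ_four, X1]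

lemma trace_X2L : LinearMap.trace ℝ E4 X2L.toLinearMap = 0 := by
  simp [trace_eq_sum_apply_single, Fin.sum_univ_four, X2]

def abCoeff₁ (a₁ : ℝ) (p : E4) : ℝ := 2 * a₁ * (p 0 * p 3 + p 1 * p 2)

def abCoeff₂ (a₂ : ℝ) (p : E4) : ℝ := 2 * a₂ * (p 0 * p 2 - p 1 * p 3)

lemma abField_eq (a₁ a₂ : ℝ) (p : E4) :
    abField a₁ a₂ p = abCoeff₁ a₁ p • X1 p + abCoeff₂ a₂ p • X2 p := rfl

def τ (p : E4) : ℝ := p 0 ^ 2 + p 1 ^ 2 - p 2 ^ 2 - p 3 ^ 2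

lemma abPressure_eq (a₁ a₂ : ℝ) (p : E4) :
    abPressure a₁ a₂ p = (1 / 4) * a₁ * a₂ * (2 * τ p ^ 2 - 1) := rfl

lemma hasFDerivAt_coord_mul (i j : Fin 4) (p : E4) :
    HasFDerivAt (fun q : E4 => q i * q j)
      (p i • EuclideanSpace.proj j + p j • EuclideanSpace.proj i : E4 →L[ℝ] ℝ) p :=
  (EuclideanSpace.proj i : E4 →L[ℝ] ℝ).hasFDerivAt.mul
    (EuclideanSpace.proj j : E4 →L[ℝ] ℝ).hasFDerivAt

lemma fderiv_abCoeff₁_apply (a₁ : ℝ) (p v : E4) :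
    fderiv ℝ (abCoeff₁ a₁) p v = 2 * a₁ * (p 0 * v 3 + p 3 * v 0 + p 1 * v 2 + p 2 * v 1) := by
  have h : HasFDerivAt (abCoeff₁ a₁) _ p :=
    ((hasFDerivAt_coord_mul 0 3 p).add (hasFDerivAt_coord_mul 1 2 p)).const_mul (2 * a₁)
  rw [h.fderiv]
  simp only [FunLike.coe_smul, FunLike.coe_add, Pi.smul_apply, Pi.add_apply,
    PiLp.proj_apply, smul_eq_mul]
  ring

lemma fderiv_abCoeff₂_apply (a₂ : ℝ) (p v : E4) :
    fderiv ℝ (abCoeff₂ a₂) p v = 2 * a₂ * (p 0 * v 2 + p 2 * v 0 - p 1 * v 3 - p 3 * v 1) := by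
  have h : HasFDerivAt (abCoeff₂ a₂) _ p :=
    ((hasFDerivAt_coord_mul 0 2 p).sub (hasFDerivAt_coord_mul 1 3 p)).const_mul (2 * a₂)
  rw [h.fderiv]
  simp only [FunLike.coe_smul, FunLike.coe_add, FunLike.coe_sub, Pi.smul_apply, Pi.add_apply,
    Pi.sub_apply, PiLp.proj_apply, smul_eq_mul]
  ring

lemma fderiv_abCoeff₁_X1 (a₁ : ℝ) (p : E4) : fderiv ℝ (abCoeff₁ a₁) p (X1 p) = 0 := by
  rw [fderiv_abCoeff₁_apply]
  simp only [X1, PiLp.toLp_apply, Matrix.cons_val]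
  ring

lemma fderiv_abCoeff₁_X2 (a₁ : ℝ) (p : E4) :
    fderiv ℝ (abCoeff₁ a₁) p (X2 p) = 2 * a₁ * τ p := by
  rw [fderiv_abCoeff₁_apply]
  simp only [X2, τ, PiLp.toLp_apply, Matrix.cons_val]
  ring

lemma fderiv_abCoeff₂_X1 (a₂ : ℝ) (p : E4) :
    fderiv ℝ (abCoeff₂ a₂) p (X1 p) = 2 * a₂ * τ p := by
  rw [fderiv_abCoeff₂_apply]
  simp only [X1, τ, PiLp.toLp_apply, Matrix.cons_val]
  ring

lemma fderiv_abCoeff₂_X2 (a₂ : ℝ) (p : E4) : fderiv ℝ (abCoeff₂ a₂) p (X2 p) = 0 := by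
  rw [fderiv_abCoeff₂_apply]
  simp only [X2, PiLp.toLp_apply, Matrix.cons_val]
  ring

lemma fderiv_abCoeff₁_abField (a₁ a₂ : ℝ) (p : E4) :
    fderiv ℝ (abCoeff₁ a₁) p (abField a₁ a₂ p) = 2 * a₁ * τ p * abCoeff₂ a₂ p := by
  rw [abField_eq, map_add, map_smul, map_smul, fderiv_abCoeff₁_X1, fderiv_abCoeff₁_X2, smul_eq_mul,
    smul_eq_mul]
  ring

lemma fderiv_abCoeff₂_abField (a₁ a₂ : ℝ) (p : E4) :
    fderiv ℝ (abCoeff₂ a₂) p (abField a₁ a₂ p) = 2 * a₂ * τ p * abCoeff₁ a₁ p := by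
  rw [abField_eq, map_add, map_smul, map_smul, fderiv_abCoeff₂_X1, fderiv_abCoeff₂_X2, smul_eq_mul,
    smul_eq_mul]
  ring

lemma hasFDerivAt_abField (a₁ a₂ : ℝ) (p : E4) :
    HasFDerivAt (abField a₁ a₂)
      (abCoeff₁ a₁ p • X1L + (fderiv ℝ (abCoeff₁ a₁) p).smulRight (X1 p)
        + (abCoeff₂ a₂ p • X2L + (fderiv ℝ (abCoeff₂ a₂) p).smulRight (X2 p))) p := by
  have h₁ : DifferentiableAt ℝ (abCoeff₁ a₁) p := by unfold abCoeff₁; fun_prop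
  have h₂ : DifferentiableAt ℝ (abCoeff₂ a₂) p := by unfold abCoeff₂; fun_prop
  exact (h₁.hasFDerivAt.smul X1L.hasFDerivAt).add (h₂.hasFDerivAt.smul X2L.hasFDerivAt)

lemma fderiv_abField_apply (a₁ a₂ : ℝ) (p v : E4) :
    fderiv ℝ (abField a₁ a₂) p v =
      abCoeff₁ a₁ p • X1 v + fderiv ℝ (abCoeff₁ a₁) p v • X1 p
        + (abCoeff₂ a₂ p • X2 v + fderiv ℝ (abCoeff₂ a₂) p v • X2 p) := by
  rw [(hasFDerivAt_abField a₁ a₂ p).fderiv]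
  simp

lemma sdiv_abField (a₁ a₂ : ℝ) (p : E4) : sdiv (abField a₁ a₂) p = 0 := by
  have htrace : LinearMap.trace ℝ E4 (fderiv ℝ (abField a₁ a₂) p).toLinearMap = 0 := by
    rw [(hasFDerivAt_abField a₁ a₂ p).fderiv]
    simp only [ContinuousLinearMap.toLinearMap_add, ContinuousLinearMap.toLinearMap_smul,
      map_add, map_smul, trace_X1L, trace_X2L]
    rw [ContinuousLinearMap.coe_smulRight, ContinuousLinearMap.coe_smulRight,
      LinearMap.trace_smulRight, LinearMap.trace_smulRight]
    simp [fderiv_abCoeff₁_X1, fderiv_abCoeff₂_X2]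
  have hradial : ⟪fderiv ℝ (abField a₁ a₂) p p, p⟫ = 0 := by
    simp only [fderiv_abField_apply, inner_add_left, real_inner_smul_left, inner_X1_self,
      inner_X2_self, mul_zero, add_zero]
  rw [sdiv, htrace, hradial, sub_zero]

lemma fderiv_abField_abField (a₁ a₂ : ℝ) (p : E4) :
    fderiv ℝ (abField a₁ a₂) p (abField a₁ a₂ p) =
      -(abCoeff₁ a₁ p ^ 2 + abCoeff₂ a₂ p ^ 2) • p
        + (2 * τ p) • ((a₁ * abCoeff₂ a₂ p) • X1 p + (a₂ * abCoeff₁ a₁ p) • X2 p) := by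
  have hX1 : X1 (abField a₁ a₂ p) = abCoeff₁ a₁ p • -p + abCoeff₂ a₂ p • Jm p := by
    rw [abField_eq, ← X1L_apply, map_add, map_smul, map_smul, X1L_apply, X1L_apply, X1_X1, X1_X2]
  have hX2 : X2 (abField a₁ a₂ p) = abCoeff₁ a₁ p • -Jm p + abCoeff₂ a₂ p • -p := by
    rw [abField_eq, ← X2L_apply, map_add, map_smul, map_smul, X2L_apply, X2L_apply, X2_X1, X2_X2]
  rw [fderiv_abField_apply, fderiv_abCoeff₁_abField, fderiv_abCoeff₂_abField, hX1, hX2]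
  module

lemma scov_abField {p : E4} (hp : ‖p‖ = 1) (a₁ a₂ : ℝ) :
    scov (abField a₁ a₂) (abField a₁ a₂) p =
      (2 * τ p) • ((a₁ * abCoeff₂ a₂ p) • X1 p + (a₂ * abCoeff₁ a₁ p) • X2 p) := by
  rw [scov, fderiv_abField_abField, Pt_smul_self_add hp]
  rw [real_inner_comm, inner_smul_left, inner_add_left, real_inner_smul_left,
    real_inner_smul_left, inner_X1_self, inner_X2_self]
  simp

def negZ₂ (p : E4) : E4 := WithLp.toLp 2 ![p 0, p 1, -p 2, -p 3]

lemma hasGradientAt_τ (p : E4) : HasGradientAt τ ((2 : ℝ) • negZ₂ p) p := by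
  have hsq := fun i : Fin 4 => ((EuclideanSpace.proj i : E4 →L[ℝ] ℝ).hasFDerivAt (x := p)).pow 2
  have h : HasFDerivAt τ _ p := (((hsq 0).add (hsq 1)).sub (hsq 2)).sub (hsq 3)
  rw [hasGradientAt_iff_hasFDerivAt]
  refine h.congr_fderiv ?_
  ext v
  simp only [negZ₂, inner_eq_fin_four, InnerProductSpace.toDual_apply_apply, map_smul, sub_apply,
    add_apply, smul_apply, PiLp.proj_apply, nsmul_eq_mul, Nat.cast_ofNat, smul_eq_mul,
    Matrix.cons_val_zero, Matrix.cons_val_one, Matrix.cons_val]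
  ring

lemma gradient_abPressure (a₁ a₂ : ℝ) (p : E4) :
    gradient (abPressure a₁ a₂) p = (a₁ * a₂ * τ p) • gradient τ p := by
  have hτ := hasGradientAt_τ p
  have h : HasFDerivAt (abPressure a₁ a₂) _ p :=
    (((hτ.hasFDerivAt.pow 2).const_mul 2).sub_const 1).const_mul ((1 / 4) * a₁ * a₂)
  rw [hτ.gradient]
  refine HasGradientAt.gradient ?_
  rw [hasGradientAt_iff_hasFDerivAt]
  refine h.congr_fderiv ?_
  ext v
  simp only [InnerProductSpace.toDual_apply_apply, map_smul, smul_apply, nsmul_eq_mul,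
    Nat.cast_ofNat, smul_eq_mul]
  ring

lemma sgrad_abPressure (a₁ a₂ : ℝ) (p : E4) :
    sgrad (abPressure a₁ a₂) p = (a₁ * a₂ * τ p) • sgrad τ p := by
  rw [sgrad, sgrad, gradient_abPressure, Pt_smul]

lemma smul_X1_add_smul_X2_eq_smul_sgrad_τ {p : E4} (hp : ‖p‖ = 1) (a₁ a₂ : ℝ) :
    (a₁ * abCoeff₂ a₂ p) • X1 p + (a₂ * abCoeff₁ a₁ p) • X2 p = -(a₁ * a₂ / 2) • sgrad τ p := by
  have hs := sum_sq_eq_one_of_norm_eq_one hp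
  rw [sgrad, (hasGradientAt_τ p).gradient, Pt, inner_eq_fin_four]
  ext i
  fin_cases i <;>
    simp only [abCoeff₁, abCoeff₂, negZ₂, X1, X2, PiLp.add_apply, PiLp.sub_apply, PiLp.smul_apply,
      smul_eq_mul, Fin.zero_eta, Fin.mk_one, Fin.reduceFinMk, Matrix.cons_val_zero,
      Matrix.cons_val_one, Matrix.cons_val]
  · linear_combination (-a₁ * a₂ * p 0) * hs
  · linear_combination (-a₁ * a₂ * p 1) * hs
  · linear_combination (a₁ * a₂ * p 2) * hs
  · linear_combination (a₁ * a₂ * p 3) * hs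

lemma isSteadyEulerWithPressure_abField (a₁ a₂ : ℝ) :
    IsSteadyEulerWithPressure (abField a₁ a₂) (abPressure a₁ a₂) := by
  intro p hp
  refine ⟨sdiv_abField a₁ a₂ p, ?_⟩
  rw [scov_abField hp, smul_X1_add_smul_X2_eq_smul_sgrad_τ hp, sgrad_abPressure, smul_smul,
    ← neg_smul]
  congr 1
  ring

lemma inner_abField_self (a₁ a₂ : ℝ) (p : E4) :
    ⟪abField a₁ a₂ p, abField a₁ a₂ p⟫ = (abCoeff₁ a₁ p ^ 2 + abCoeff₂ a₂ p ^ 2) * ⟪p, p⟫ := by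
  rw [abField_eq, inner_add_left, inner_add_right, inner_add_right]
  simp only [real_inner_smul_left, real_inner_smul_right, inner_X1_X1, inner_X2_X2,
    inner_X1_X2, real_inner_comm (X1 p) (X2 p)]
  ring

section Hopf

variable (s φ₁ φ₂ : ℝ)

open Real

lemma inner_hopfPt_self : ⟪hopfPt s φ₁ φ₂, hopfPt s φ₁ φ₂⟫ = 1 := by
  simp only [inner_eq_fin_four, hopfPt, Matrix.cons_val_zero, Matrix.cons_val_one, Matrix.cons_val]
  linear_combination (cos s ^ 2) * sin_sq_add_cos_sq φ₁ + (sin s ^ 2) * sin_sq_add_cos_sq φ₂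
    + cos_sq_add_sin_sq s

lemma τ_hopfPt : τ (hopfPt s φ₁ φ₂) = cos (2 * s) := by
  simp only [τ, hopfPt, cos_two_mul, Matrix.cons_val_zero, Matrix.cons_val_one, Matrix.cons_val]
  linear_combination (cos s ^ 2) * sin_sq_add_cos_sq φ₁ - (sin s ^ 2) * sin_sq_add_cos_sq φ₂
    - sin_sq_add_cos_sq s

lemma abCoeff₁_hopfPt (a₁ : ℝ) :
    abCoeff₁ a₁ (hopfPt s φ₁ φ₂) = a₁ * sin (2 * s) * sin (φ₁ + φ₂) := by
  simp only [abCoeff₁, hopfPt, sin_two_mul, sin_add, Matrix.cons_val_zero, Matrix.cons_val_one,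
    Matrix.cons_val]
  ring

lemma abCoeff₂_hopfPt (a₂ : ℝ) :
    abCoeff₂ a₂ (hopfPt s φ₁ φ₂) = a₂ * sin (2 * s) * cos (φ₁ + φ₂) := by
  simp only [abCoeff₂, hopfPt, sin_two_mul, cos_add, Matrix.cons_val_zero, Matrix.cons_val_one,
    Matrix.cons_val]
  ring

end Hopf

/-- `u = 2a₁(x₁y₂+y₁x₂)X₁ + 2a₂(x₁x₂−y₁y₂)X₂` is a steady Euler field on
S³ with pressure `abPressure a₁ a₂`, and in Hopf coordinates its Bernoulli function
`b = π + ½|u|²` equals `¼[a₁a₂cos 4s + (a₁²+a₂²−(a₁²−a₂²)cos 2(φ₁+φ₂))sin² 2s]`. -/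
theorem statement15 (a₁ a₂ : ℝ) :
    IsSteadyEulerWithPressure (abField a₁ a₂) (abPressure a₁ a₂) ∧
    ∀ s φ₁ φ₂ : ℝ,
      abPressure a₁ a₂ (hopfPt s φ₁ φ₂)
          + (1/2) * ⟪abField a₁ a₂ (hopfPt s φ₁ φ₂), abField a₁ a₂ (hopfPt s φ₁ φ₂)⟫
        = (1/4) * (a₁ * a₂ * Real.cos (4 * s)
            + (a₁ ^ 2 + a₂ ^ 2 - (a₁ ^ 2 - a₂ ^ 2) * Real.cos (2 * (φ₁ + φ₂)))
              * Real.sin (2 * s) ^ 2) := by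
  refine ⟨isSteadyEulerWithPressure_abField a₁ a₂, fun s φ₁ φ₂ => ?_⟩
  rw [abPressure_eq, inner_abField_self, inner_hopfPt_self, τ_hopfPt, abCoeff₁_hopfPt,
    abCoeff₂_hopfPt, show 4 * s = 2 * (2 * s) by ring, Real.cos_two_mul (2 * s),
    Real.cos_two_mul (φ₁ + φ₂)]
  linear_combination (1/2) * a₁ ^ 2 * Real.sin (2 * s) ^ 2 * Real.sin_sq_add_cos_sq (φ₁ + φ₂)
end
end
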